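/- arXiv:1209.6227 — 4 statements merged into one kernel-verified Lean document; each statement's English description precedes it below -/
import Mathlib

section
/- Let Γ be a countable group acting on a probability space preserving the trace τ on the abelian von Neumann algebra A = L^∞(X). The action σ is 2-mixing (i.e. for all a,b,c ∈ A, τ(a σ_g(b) σ_h(c)) → τ(a)τ(b)τ(c) as g, h, g⁻¹h → ∞) if and only if for all a,b,c ∈ A, |τ(a σ_g(b) σ_h(c)) − τ(a) τ(σ_g(b) σ_h(c))| → 0 as g → ∞ and h → ∞. -/
open Filter

/-- The 2-mixing property is equivalent to the vanishing of
`|τ(a σ_g(b) σ_h(c)) − τ(a) τ(σ_g(b) σ_h(c))|` as `g, h → ∞`, for a mixing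
trace-preserving action of a countable group `Γ` on an abelian von Neumann
algebra `(A, τ)`. -/
theorem two_mixing_iff
    {Γ : Type*} [Group Γ] [Countable Γ]
    {A : Type*} [CommRing A] [Algebra ℂ A]
    (σ : Γ →* (A ≃ₐ[ℂ] A)) (τ : A →ₗ[ℂ] ℂ)
    (htrace : ∀ (g : Γ) (a : A), τ (σ g a) = τ a)
    (hmixing : ∀ a b : A,
      Tendsto (fun g : Γ => τ (a * σ g b)) cofinite (nhds (τ a * τ b))) :
    (∀ a b c : A,
        Tendsto (fun p : Γ × Γ => τ (a * σ p.1 b * σ p.2 c))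
          ((cofinite ×ˢ cofinite) ⊓ comap (fun p : Γ × Γ => p.1⁻¹ * p.2) cofinite)
          (nhds (τ a * τ b * τ c)))
      ↔
    (∀ a b c : A,
        Tendsto (fun p : Γ × Γ =>
            ‖τ (a * σ p.1 b * σ p.2 c) - τ a * τ (σ p.1 b * σ p.2 c)‖)
          (cofinite ×ˢ cofinite) (nhds 0)) := by
  have key : ∀ (g h : Γ) (b c : A), σ g b * σ h c = σ g (b * σ (g⁻¹ * h) c) := by
    intro g h b c
    rw [map_mul]
    congr 1
    rw [← AlgEquiv.mul_apply, ← map_mul σ, mul_inv_cancel_left]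
  constructor
  · intro H a b c
    rw [← tendsto_zero_iff_norm_tendsto_zero, tendsto_iff_ultrafilter]
    intro U hU
    have hfst : Tendsto Prod.fst (U : Filter (Γ × Γ)) cofinite :=
      tendsto_fst.mono_left hU
    rcases (U.map (fun p : Γ × Γ => p.1⁻¹ * p.2)).le_cofinite_or_eq_pure with hc | ⟨k, hk⟩
    · have hq : Tendsto (fun p : Γ × Γ => p.1⁻¹ * p.2) (U : Filter (Γ × Γ)) cofinite := by
        rwa [Ultrafilter.coe_map] at hc
      have hle : (U : Filter (Γ × Γ)) ≤
          (cofinite ×ˢ cofinite) ⊓ comap (fun p : Γ × Γ => p.1⁻¹ * p.2) cofinite :=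
        le_inf hU (map_le_iff_le_comap.mp hq)
      have h1 := (H a b c).mono_left hle
      have h2 : Tendsto (fun p : Γ × Γ => τ (σ p.1 b * σ p.2 c)) (U : Filter (Γ × Γ))
          (nhds (τ b * τ c)) := by
        refine ((hmixing b c).comp hq).congr fun p => ?_
        simp only [Function.comp]
        rw [key, htrace]
      have h3 := h1.sub ((tendsto_const_nhds (x := τ a)).mul h2)
      simpa [mul_assoc] using h3
    · have hmem : ∀ᶠ p : Γ × Γ in (U : Filter (Γ × Γ)), p.1⁻¹ * p.2 = k := by
        have h : {k} ∈ (U.map (fun p : Γ × Γ => p.1⁻¹ * p.2) : Filter Γ) := by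
          rw [hk]; exact singleton_mem_pure
        rw [Ultrafilter.coe_map, mem_map] at h
        exact h
      have hmix := ((hmixing a (b * σ k c)).comp hfst).sub
        (tendsto_const_nhds (x := τ a * τ (b * σ k c)))
      rw [sub_self] at hmix
      refine hmix.congr' ?_
      filter_upwards [hmem] with p hp
      simp only [Function.comp]
      rw [mul_assoc, key p.1 p.2, hp, htrace]
  · intro H a b c
    have h1 : Tendsto (fun p : Γ × Γ =>
        τ (a * σ p.1 b * σ p.2 c) - τ a * τ (σ p.1 b * σ p.2 c))
        ((cofinite ×ˢ cofinite) ⊓ comap (fun p : Γ × Γ => p.1⁻¹ * p.2) cofinite)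
        (nhds 0) := by
      rw [tendsto_zero_iff_norm_tendsto_zero]
      exact (H a b c).mono_left inf_le_left
    have hq : Tendsto (fun p : Γ × Γ => p.1⁻¹ * p.2)
        ((cofinite ×ˢ cofinite) ⊓ comap (fun p : Γ × Γ => p.1⁻¹ * p.2) cofinite) cofinite :=
      tendsto_comap.mono_left inf_le_right
    have h2 : Tendsto (fun p : Γ × Γ => τ a * τ (σ p.1 b * σ p.2 c))
        ((cofinite ×ˢ cofinite) ⊓ comap (fun p : Γ × Γ => p.1⁻¹ * p.2) cofinite)
        (nhds (τ a * (τ b * τ c))) := by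
      refine (tendsto_const_nhds (x := τ a)).mul (((hmixing b c).comp hq).congr fun p => ?_)
      simp only [Function.comp]
      rw [key, htrace]
    have h3 := h1.add h2
    rw [zero_add] at h3
    simpa [mul_assoc] using h3.congr fun p => by ring
end

section
/- Let H be a Hilbert space, x, y, z ∈ H with ‖x‖ ≤ R, and suppose ‖x − y‖² ≤ R² − δ², ‖x − z‖² ≤ R² − δ², and |⟨y, z⟩| ≤ ε with 4ε ≤ δ². Then ‖x − (y + z)‖² ≤ R² − 3δ²/2. -/
open RCLike

theorem norm_sub_add_sq_eq {𝕜 E : Type*} [RCLike 𝕜] [SeminormedAddCommGroup E]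
    [InnerProductSpace 𝕜 E] (x y z : E) :
    ‖x - (y + z)‖ ^ 2 = ‖x - y‖ ^ 2 + ‖x - z‖ ^ 2 - ‖x‖ ^ 2 + 2 * re (inner 𝕜 y z) := by
  rw [← sub_sub, norm_sub_sq (𝕜 := 𝕜) (x - y) z, norm_sub_sq (𝕜 := 𝕜) x z,
    inner_sub_left, map_sub]
  ring

/-- Quantitative doubling step: if `‖x‖ = R`, `‖x − y‖² ≤ R² − δ²`,
`‖x − z‖² ≤ R² − δ²`, `|⟨y, z⟩| ≤ ε` and `4ε ≤ δ²`, then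
`‖x − (y + z)‖² ≤ R² − 3δ²/2`. -/
theorem doubling_step
    {H : Type*} [NormedAddCommGroup H] [InnerProductSpace ℂ H]
    (x y z : H) (R δ ε : ℝ)
    (hx : ‖x‖ = R)
    (hy : ‖x - y‖ ^ 2 ≤ R ^ 2 - δ ^ 2)
    (hz : ‖x - z‖ ^ 2 ≤ R ^ 2 - δ ^ 2)
    (hyz : ‖(inner ℂ y z : ℂ)‖ ≤ ε)
    (hεδ : 4 * ε ≤ δ ^ 2) :
    ‖x - (y + z)‖ ^ 2 ≤ R ^ 2 - 3 * δ ^ 2 / 2 := by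
  have hre : re (inner ℂ y z) ≤ ε := (re_le_norm _).trans hyz
  rw [norm_sub_add_sq_eq (𝕜 := ℂ), hx]
  linarith
end

section
/- Let (v_g)_{g∈Γ}, (w_g)_{g∈Γ} ∈ ℓ²(Γ) with Σ_g |v_g|² ≤ 1 and Σ_g |w_g|² ≤ 1, let h = sup_g |v_g|, let F ⊂ Γ be a finite set, let C ≥ 0, ε > 0, and let c: Γ × Γ → ℂ be a function with |c(g, g')| ≤ C for all g, g' and |c(g, g')| < ε whenever g' ∉ gF. Then |Σ_{g, g' ∈ Γ} v_g w_{g⁻¹} \overline{v_{g'} w_{g'⁻¹}} c(g, g')| ≤ C · h · |F| + ε. -/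
/-!
Write `a g = ‖v g‖ * ‖w g⁻¹‖`, so that the summand has norm `a g * a g' * ‖c (g, g')‖`.
By AM–GM, `∑ a ≤ (∑ ‖v‖² + ∑ ‖w‖²) / 2 ≤ 1`, and `a ≤ h` since `‖w‖ ≤ 1`. For fixed `g`, bounding
`‖c (g, g')‖` by `C` on the `|F|` points `g' ∈ gF` and by `ε` elsewhere gives
`∑_{g'} a g' ‖c (g, g')‖ ≤ C h |F| + ε`; summing against `a g` keeps this bound.
The computation is done in `ℝ≥0∞`, where no summability side conditions arise.
-/

open scoped ENNReal NNReal

namespace ENNReal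

variable {α : Type*}

theorem two_mul_le_add_sq (x y : ℝ≥0∞) : 2 * x * y ≤ x ^ 2 + y ^ 2 := by
  rcases eq_or_ne x ⊤ with rfl | hx
  · simp
  rcases eq_or_ne y ⊤ with rfl | hy
  · simp
  lift x to ℝ≥0 using hx
  lift y to ℝ≥0 using hy
  exact_mod_cast _root_.two_mul_le_add_sq x y

theorem tsum_mul_le_one_of_tsum_sq_le_one {f g : α → ℝ≥0∞}
    (hf : ∑' i, f i ^ 2 ≤ 1) (hg : ∑' i, g i ^ 2 ≤ 1) : ∑' i, f i * g i ≤ 1 := by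
  refine (ENNReal.mul_le_mul_iff_right two_ne_zero ofNat_ne_top).1 ?_
  calc 2 * ∑' i, f i * g i = ∑' i, 2 * f i * g i := by
        simp only [mul_assoc, ENNReal.tsum_mul_left]
    _ ≤ ∑' i, (f i ^ 2 + g i ^ 2) := ENNReal.tsum_le_tsum fun i => two_mul_le_add_sq _ _
    _ = ∑' i, f i ^ 2 + ∑' i, g i ^ 2 := ENNReal.tsum_add
    _ ≤ 2 * 1 := by rw [two_mul]; gcongr

theorem tsum_mul_le_of_le_off_finset (a k : α → ℝ≥0∞) (s : Finset α) {C ε : ℝ≥0∞}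
    (hC : ∀ x, k x ≤ C) (hε : ∀ x ∉ s, k x ≤ ε) :
    ∑' x, a x * k x ≤ C * ∑ x ∈ s, a x + ε * ∑' x, a x := by
  rw [sum_eq_tsum_indicator, ← ENNReal.tsum_mul_left, ← ENNReal.tsum_mul_left,
    ← ENNReal.tsum_add]
  refine ENNReal.tsum_le_tsum fun x => ?_
  by_cases hx : x ∈ s
  · simpa [hx, mul_comm] using le_add_right (mul_le_mul_right (hC x) (a x))
  · simpa [hx, mul_comm] using mul_le_mul_right (hε x hx) (a x)

theorem tsum_prod_mul_mul_le_of_le_off_translates {Γ : Type*} [Group Γ] (a : Γ → ℝ≥0∞)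
    {h : ℝ≥0∞} (hah : ∀ g, a g ≤ h) (ha : ∑' g, a g ≤ 1) (F : Finset Γ) {C ε : ℝ≥0∞}
    (K : Γ × Γ → ℝ≥0∞) (hKC : ∀ p, K p ≤ C)
    (hKε : ∀ g g' : Γ, (∀ f ∈ F, g' ≠ g * f) → K (g, g') ≤ ε) :
    ∑' p : Γ × Γ, a p.1 * a p.2 * K p ≤ C * h * F.card + ε := by
  have row (g : Γ) : ∑' g', a g' * K (g, g') ≤ C * h * F.card + ε :=
    calc ∑' g', a g' * K (g, g')
        ≤ C * ∑ f ∈ F, a (g * f) + ε * ∑' g', a g' := by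
          have hoff : ∀ g' ∉ F.map (mulLeftEmbedding g), K (g, g') ≤ ε := fun g' hg' =>
            hKε g g' fun f hf hgf => hg' (Finset.mem_map.2 ⟨f, hf, hgf.symm⟩)
          simpa only [Finset.sum_map, mulLeftEmbedding_apply] using
            tsum_mul_le_of_le_off_finset a _ _ (fun g' => hKC (g, g')) hoff
      _ ≤ C * (F.card * h) + ε * 1 := by
          gcongr
          simpa using Finset.sum_le_card_nsmul F _ h fun f _ => hah (g * f)
      _ = C * h * F.card + ε := by ring
  calc ∑' p : Γ × Γ, a p.1 * a p.2 * K p = ∑' g, a g * ∑' g', a g' * K (g, g') := by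
        simp only [ENNReal.tsum_prod', mul_assoc, ENNReal.tsum_mul_left]
    _ ≤ ∑' g, a g * (C * h * F.card + ε) := by gcongr with g; exact row g
    _ ≤ C * h * F.card + ε := by
        rw [ENNReal.tsum_mul_right]
        exact mul_le_of_le_one_left' ha

end ENNReal

section

variable {ι E : Type*} [SeminormedAddGroup E]

theorem enorm_le_ofReal_of_norm_le {x : E} {r : ℝ} (h : ‖x‖ ≤ r) : ‖x‖ₑ ≤ ENNReal.ofReal r :=
  ofReal_norm x ▸ ENNReal.ofReal_le_ofReal h

variable {x : ι → E}

theorem norm_le_one_of_tsum_sq_le_one (hx : Summable fun i => ‖x i‖ ^ 2)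
    (h : ∑' i, ‖x i‖ ^ 2 ≤ 1) (i : ι) : ‖x i‖ ≤ 1 :=
  (sq_le_one_iff₀ (norm_nonneg _)).1 ((hx.le_tsum i fun _ _ => by positivity).trans h)

theorem tsum_enorm_sq_le_one (hx : Summable fun i => ‖x i‖ ^ 2) (h : ∑' i, ‖x i‖ ^ 2 ≤ 1) :
    ∑' i, ‖x i‖ₑ ^ 2 ≤ 1 := by
  simp only [← ofReal_norm, ← ENNReal.ofReal_pow (norm_nonneg _)]
  rw [← ENNReal.ofReal_tsum_of_nonneg (fun _ => by positivity) hx]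
  exact ENNReal.ofReal_le_one.2 h

end

theorem height_cauchy_schwarz_estimate_general
    {Γ : Type*} [Group Γ]
    (v w : Γ → ℂ)
    (hv_sum : Summable (fun g => ‖v g‖ ^ 2)) (hv : ∑' g, ‖v g‖ ^ 2 ≤ 1)
    (hw_sum : Summable (fun g => ‖w g‖ ^ 2)) (hw : ∑' g, ‖w g‖ ^ 2 ≤ 1)
    (h : ℝ) (hh : h = ⨆ g, ‖v g‖)
    (F : Finset Γ) (C ε : ℝ) (hε : 0 < ε)
    (c : Γ × Γ → ℂ)
    (hc_bdd : ∀ g g' : Γ, ‖c (g, g')‖ ≤ C)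
    (hc_small : ∀ g g' : Γ, (∀ f ∈ F, g' ≠ g * f) → ‖c (g, g')‖ < ε) :
    ‖∑' p : Γ × Γ,
        v p.1 * w p.1⁻¹ * (starRingEnd ℂ) (v p.2 * w p.2⁻¹) * c p‖ ≤
      C * h * F.card + ε := by
  have hC : 0 ≤ C := (norm_nonneg _).trans (hc_bdd 1 1)
  have hh₀ : 0 ≤ h := hh ▸ Real.iSup_nonneg fun g => norm_nonneg _
  have hvh (g : Γ) : ‖v g‖ ≤ h :=
    hh ▸ le_ciSup ⟨1, Set.forall_mem_range.2 (norm_le_one_of_tsum_sq_le_one hv_sum hv)⟩ g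
  have hah (g : Γ) : ‖v g‖ₑ * ‖w g⁻¹‖ₑ ≤ .ofReal h := by
    simpa using mul_le_mul' (enorm_le_ofReal_of_norm_le (hvh g))
      (enorm_le_ofReal_of_norm_le (norm_le_one_of_tsum_sq_le_one hw_sum hw g⁻¹))
  have ha : ∑' g, ‖v g‖ₑ * ‖w g⁻¹‖ₑ ≤ 1 :=
    ENNReal.tsum_mul_le_one_of_tsum_sq_le_one (tsum_enorm_sq_le_one hv_sum hv)
      (((Equiv.inv Γ).tsum_eq fun g => ‖w g‖ₑ ^ 2).trans_le (tsum_enorm_sq_le_one hw_sum hw))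
  rw [← ENNReal.ofReal_le_ofReal_iff (by positivity), ofReal_norm]
  calc _ ≤ ∑' p : Γ × Γ, ‖v p.1 * w p.1⁻¹ * (starRingEnd ℂ) (v p.2 * w p.2⁻¹) * c p‖ₑ :=
        enorm_tsum_le_tsum_enorm
    _ = ∑' p : Γ × Γ, ‖v p.1‖ₑ * ‖w p.1⁻¹‖ₑ * (‖v p.2‖ₑ * ‖w p.2⁻¹‖ₑ) * ‖c p‖ₑ := by
        simp only [enorm_mul, RCLike.enorm_conj]
    _ ≤ .ofReal C * .ofReal h * F.card + .ofReal ε :=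
        ENNReal.tsum_prod_mul_mul_le_of_le_off_translates _ hah ha F _
          (fun p => enorm_le_ofReal_of_norm_le (hc_bdd p.1 p.2))
          fun g g' hg => enorm_le_ofReal_of_norm_le (hc_small g g' hg).le
    _ = .ofReal (C * h * F.card + ε) := by
        rw [ENNReal.ofReal_add (by positivity) hε.le, ENNReal.ofReal_mul (by positivity),
          ENNReal.ofReal_mul hC, ENNReal.ofReal_natCast]

/-- The abstract Cauchy–Schwarz estimate behind the height lemma:
if `v, w ∈ ℓ²(Γ)` with norms at most `1`, `h = sup_g |v_g|`, `F ⊆ Γ` is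
finite, `|c(g,g')| ≤ C` everywhere and `|c(g,g')| < ε` off `{(g,g') : g' ∈ gF}`,
then `|Σ_{g,g'} v_g w_{g⁻¹} conj(v_{g'} w_{g'⁻¹}) c(g,g')| ≤ C·h·|F| + ε`. -/
theorem height_cauchy_schwarz_estimate
    {Γ : Type*} [Group Γ] [Countable Γ]
    (v w : Γ → ℂ)
    (hv_sum : Summable (fun g => ‖v g‖ ^ 2)) (hv : ∑' g, ‖v g‖ ^ 2 ≤ 1)
    (hw_sum : Summable (fun g => ‖w g‖ ^ 2)) (hw : ∑' g, ‖w g‖ ^ 2 ≤ 1)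
    (h : ℝ) (hh : h = ⨆ g, ‖v g‖)
    (F : Finset Γ) (C ε : ℝ) (hC : 0 ≤ C) (hε : 0 < ε)
    (c : Γ × Γ → ℂ)
    (hc_bdd : ∀ g g' : Γ, ‖c (g, g')‖ ≤ C)
    (hc_small : ∀ g g' : Γ, (∀ f ∈ F, g' ≠ g * f) → ‖c (g, g')‖ < ε) :
    ‖∑' p : Γ × Γ,
        v p.1 * w p.1⁻¹ * (starRingEnd ℂ) (v p.2 * w p.2⁻¹) * c p‖ ≤
      C * h * F.card + ε :=
  height_cauchy_schwarz_estimate_general v w hv_sum hv hw_sum hw h hh F C ε hε c hc_bdd hc_small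
end

section
/- Let V be an inner product space with a unitary action σ of a group Γ, and suppose a ∈ V satisfies: for all ε > 0 there is a finite set F ⊆ Γ with |⟨σ_s(a), a⟩| < ε for s ∉ F (mixing coefficient for a). Let (v_n) be a sequence in ℓ²(Γ) with ‖v_n‖₂ ≤ 1 and heights h(v_n) = sup_g |v_{n,g}| → 0. Then for any sequence (w_n) in ℓ²(Γ) with ‖w_n‖₂ ≤ 1, the quantity Σ_{g, g'} v_{n,g} w_{n,g⁻¹} \overline{v_{n,g'} w_{n,g'⁻¹}} ⟨σ_g(a), σ_{g'}(a)⟩ tends to 0 as n → ∞. -/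
open Filter
open scoped Pointwise

/-! Put `u g = ‖v g‖ ‖w g⁻¹‖`; by AM–GM `∑ u ≤ 1`, and `u ≤ h := sup ‖v‖` since `‖w‖ ≤ 1`.
The summand at `(g, g')` is bounded by `u g u g' |⟨σ (g⁻¹ g') a, a⟩|`. Given `δ > 0` and the
finite set `F` off which the coefficient is below `δ`, for fixed `g` it is below `δ` unless `g'`
lies in the translate `g • F` of cardinality `|F|`, where it is at most `‖a‖²`. So the sum over `g'`
is at most `δ + ‖a‖² |F| h`, summing against `u g` keeps this bound, and `h → 0`. -/

section Summation

variable {α : Type*}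

theorem summable_mul_of_summable_sq {f g : α → ℝ} (hf : Summable fun x => f x ^ 2)
    (hg : Summable fun x => g x ^ 2) : Summable fun x => f x * g x := by
  refine Summable.of_norm_bounded ((hf.add hg).div_const 2) fun x => ?_
  rw [Real.norm_eq_abs, abs_mul]
  nlinarith [two_mul_le_add_sq |f x| |g x|, sq_abs (f x), sq_abs (g x)]

theorem tsum_mul_le_one_of_tsum_sq_le_one {f g : α → ℝ} (hf : Summable fun x => f x ^ 2)
    (hg : Summable fun x => g x ^ 2) (hf1 : ∑' x, f x ^ 2 ≤ 1) (hg1 : ∑' x, g x ^ 2 ≤ 1) :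
    ∑' x, f x * g x ≤ 1 :=
  calc ∑' x, f x * g x ≤ ∑' x, (f x ^ 2 + g x ^ 2) / 2 :=
        (summable_mul_of_summable_sq hf hg).tsum_le_tsum
          (fun x => by nlinarith [two_mul_le_add_sq (f x) (g x)]) ((hf.add hg).div_const 2)
    _ = ((∑' x, f x ^ 2) + ∑' x, g x ^ 2) / 2 := by rw [tsum_div_const, hf.tsum_add hg]
    _ ≤ 1 := by linarith

theorem norm_le_one_of_tsum_sq_le_one_s16 {E : Type*} [SeminormedAddGroup E] {f : α → E}
    (hf : Summable fun x => ‖f x‖ ^ 2) (hf1 : ∑' x, ‖f x‖ ^ 2 ≤ 1) (x : α) : ‖f x‖ ≤ 1 :=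
  (pow_le_one_iff_of_nonneg (norm_nonneg _) two_ne_zero).1 <|
    (hf.le_tsum x fun _ _ => sq_nonneg _).trans hf1

theorem summable_mul_and_tsum_mul_le_of_le_off_finset {u k : α → ℝ} {δ M h : ℝ} (S : Finset α)
    (hu0 : ∀ x, 0 ≤ u x) (hu : Summable u) (hu1 : ∑' x, u x ≤ 1) (huh : ∀ x, u x ≤ h)
    (hk0 : ∀ x, 0 ≤ k x) (hkM : ∀ x, k x ≤ M) (hδ : 0 ≤ δ) (hkδ : ∀ x ∉ S, k x ≤ δ) :
    Summable (fun x => u x * k x) ∧ ∑' x, u x * k x ≤ δ + M * S.card * h := by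
  classical
  set b : α → ℝ := fun x => if x ∈ S then M * u x else 0
  have hb_zero : ∀ x ∉ S, b x = 0 := fun x hx => if_neg hx
  have hb : Summable b := summable_of_ne_finset_zero hb_zero
  have hle : ∀ x, u x * k x ≤ δ * u x + b x := by
    intro x
    by_cases hx : x ∈ S
    · simp only [b, if_pos hx]
      nlinarith [hu0 x, hkM x, mul_nonneg hδ (hu0 x)]
    · simp only [b, if_neg hx]
      nlinarith [hu0 x, hkδ x hx]
  have hdom : Summable fun x => δ * u x + b x := (hu.mul_left δ).add hb
  have hsum : Summable fun x => u x * k x :=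
    hdom.of_nonneg_of_le (fun x => mul_nonneg (hu0 x) (hk0 x)) hle
  refine ⟨hsum, ?_⟩
  have hbS : ∑' x, b x ≤ M * S.card * h := by
    rw [tsum_eq_sum hb_zero]
    calc ∑ x ∈ S, b x ≤ S.card • (M * h) := Finset.sum_le_card_nsmul _ _ _ fun x hx => by
          simp only [b, if_pos hx]
          exact mul_le_mul_of_nonneg_left (huh x) ((hk0 x).trans (hkM x))
      _ = M * S.card * h := by rw [nsmul_eq_mul]; ring
  calc ∑' x, u x * k x ≤ ∑' x, (δ * u x + b x) := hsum.tsum_le_tsum hle hdom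
    _ = δ * ∑' x, u x + ∑' x, b x := by rw [(hu.mul_left δ).tsum_add hb, tsum_mul_left]
    _ ≤ δ + M * S.card * h := by nlinarith

theorem summable_and_tsum_prod_le_of_tsum_le {u : α → ℝ} {k : α → α → ℝ} {C : ℝ}
    (hu0 : ∀ x, 0 ≤ u x) (hu : Summable u) (hu1 : ∑' x, u x ≤ 1) (hk0 : ∀ x y, 0 ≤ k x y)
    (hC : 0 ≤ C) (hrow : ∀ x, Summable fun y => u y * k x y)
    (hrow_le : ∀ x, ∑' y, u y * k x y ≤ C) :
    Summable (fun p : α × α => u p.1 * u p.2 * k p.1 p.2) ∧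
      ∑' p : α × α, u p.1 * u p.2 * k p.1 p.2 ≤ C := by
  have hfib : ∀ x, ∑' y, u x * u y * k x y = u x * ∑' y, u y * k x y := fun x => by
    simp_rw [mul_assoc]
    exact tsum_mul_left
  have hfib_sum : ∀ x, Summable fun y => u x * u y * k x y := fun x => by
    simpa only [mul_assoc] using (hrow x).mul_left (u x)
  have hout : Summable fun x => u x * ∑' y, u y * k x y :=
    (hu.mul_right C).of_nonneg_of_le
      (fun x => mul_nonneg (hu0 x) (tsum_nonneg fun y => mul_nonneg (hu0 y) (hk0 x y)))
      (fun x => mul_le_mul_of_nonneg_left (hrow_le x) (hu0 x))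
  have hsum : Summable (fun p : α × α => u p.1 * u p.2 * k p.1 p.2) :=
    (summable_prod_of_nonneg fun p => mul_nonneg (mul_nonneg (hu0 _) (hu0 _)) (hk0 _ _)).2
      ⟨hfib_sum, by simpa only [hfib] using hout⟩
  refine ⟨hsum, ?_⟩
  calc ∑' p : α × α, u p.1 * u p.2 * k p.1 p.2 = ∑' x, u x * ∑' y, u y * k x y := by
        rw [hsum.tsum_prod' hfib_sum]
        exact tsum_congr hfib
    _ ≤ ∑' x, u x * C :=
        hout.tsum_le_tsum (fun x => mul_le_mul_of_nonneg_left (hrow_le x) (hu0 x))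
          (hu.mul_right C)
    _ = (∑' x, u x) * C := tsum_mul_right
    _ ≤ C := by nlinarith

end Summation

theorem tendsto_nhds_zero_of_norm_le_add_mul {ι E : Type*} [SeminormedAddGroup E] {l : Filter ι}
    {x : ι → E} {h : ι → ℝ} (hh : Tendsto h l (nhds 0))
    (hx : ∀ δ > 0, ∃ C, ∀ i, ‖x i‖ ≤ δ + C * h i) : Tendsto x l (nhds 0) := by
  rw [NormedAddGroup.tendsto_nhds_zero]
  intro ε hε
  obtain ⟨C, hC⟩ := hx (ε / 2) (half_pos hε)
  have hCh : Tendsto (fun i => C * h i) l (nhds 0) := by simpa using hh.const_mul C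
  filter_upwards [hCh.eventually_lt_const (half_pos hε)] with i hi
  linarith [hC i]

theorem summable_and_tsum_norm_mul_norm_inv_le_one {ι E : Type*} [InvolutiveInv ι]
    [SeminormedAddGroup E] {v w : ι → E}
    (hv_sum : Summable fun g => ‖v g‖ ^ 2) (hv : ∑' g, ‖v g‖ ^ 2 ≤ 1)
    (hw_sum : Summable fun g => ‖w g‖ ^ 2) (hw : ∑' g, ‖w g‖ ^ 2 ≤ 1) :
    Summable (fun g => ‖v g‖ * ‖w g⁻¹‖) ∧ ∑' g, ‖v g‖ * ‖w g⁻¹‖ ≤ 1 := by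
  have hw_inv_sum : Summable fun g => ‖w g⁻¹‖ ^ 2 := (Equiv.inv ι).summable_iff.2 hw_sum
  have hw_inv : ∑' g, ‖w g⁻¹‖ ^ 2 ≤ 1 := by
    rwa [← (Equiv.inv ι).tsum_eq fun g => ‖w g‖ ^ 2] at hw
  exact ⟨summable_mul_of_summable_sq hv_sum hw_inv_sum,
    tsum_mul_le_one_of_tsum_sq_le_one hv_sum hw_inv_sum hv hw_inv⟩

section UnitaryAction

variable {Γ V : Type*} [Group Γ] [NormedAddCommGroup V] [InnerProductSpace ℝ V]

theorem abs_inner_map_map_le (e e' : V ≃ₗᵢ[ℝ] V) (a : V) :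
    |(inner ℝ (e a) (e' a) : ℝ)| ≤ ‖a‖ ^ 2 :=
  calc |(inner ℝ (e a) (e' a) : ℝ)| ≤ ‖e a‖ * ‖e' a‖ := abs_real_inner_le_norm _ _
    _ = ‖a‖ ^ 2 := by rw [LinearIsometryEquiv.norm_map, LinearIsometryEquiv.norm_map, sq]

theorem inner_map_map_eq_inner_map_inv_mul (σ : Γ →* (V ≃ₗᵢ[ℝ] V)) (g g' : Γ) (a : V) :
    (inner ℝ (σ g a) (σ g' a) : ℝ) = inner ℝ (σ (g⁻¹ * g') a) a := by
  have : σ g' a = σ g (σ (g⁻¹ * g') a) := by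
    rw [← Function.comp_apply (f := σ g), ← LinearIsometryEquiv.coe_mul, ← map_mul,
      mul_inv_cancel_left]
  rw [this, LinearIsometryEquiv.inner_map_map, real_inner_comm]

theorem norm_tsum_le_of_abs_inner_le_off_finset (σ : Γ →* (V ≃ₗᵢ[ℝ] V)) (a : V) {δ : ℝ}
    (hδ : 0 ≤ δ) (F : Finset Γ) (hF : ∀ s ∉ F, |(inner ℝ (σ s a) a : ℝ)| ≤ δ) (v w : Γ → ℂ)
    (hv_sum : Summable fun g => ‖v g‖ ^ 2) (hv : ∑' g, ‖v g‖ ^ 2 ≤ 1)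
    (hw_sum : Summable fun g => ‖w g‖ ^ 2) (hw : ∑' g, ‖w g‖ ^ 2 ≤ 1) :
    ‖∑' p : Γ × Γ, v p.1 * w p.1⁻¹ * (starRingEnd ℂ) (v p.2 * w p.2⁻¹) *
        ((inner ℝ (σ p.1 a) (σ p.2 a) : ℝ) : ℂ)‖ ≤ δ + ‖a‖ ^ 2 * F.card * ⨆ g, ‖v g‖ := by
  classical
  set h := ⨆ g, ‖v g‖
  set u : Γ → ℝ := fun g => ‖v g‖ * ‖w g⁻¹‖
  set k : Γ → Γ → ℝ := fun g g' => |(inner ℝ (σ g a) (σ g' a) : ℝ)|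
  obtain ⟨hu, hu1⟩ := summable_and_tsum_norm_mul_norm_inv_le_one hv_sum hv hw_sum hw
  have hu0 : ∀ g, 0 ≤ u g := fun g => by positivity
  have huh : ∀ g, u g ≤ h := fun g =>
    calc u g ≤ ‖v g‖ * 1 := mul_le_mul_of_nonneg_left
          (norm_le_one_of_tsum_sq_le_one_s16 hw_sum hw g⁻¹) (norm_nonneg _)
      _ ≤ h := by
          rw [mul_one]
          exact le_ciSup ⟨1, Set.forall_mem_range.2 (norm_le_one_of_tsum_sq_le_one_s16 hv_sum hv)⟩ g
  have hh0 : 0 ≤ h := Real.iSup_nonneg fun g => norm_nonneg _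
  have hband : ∀ g, ∀ g' ∉ g • F, k g g' ≤ δ := fun g g' hg' => by
    simp only [k, inner_map_map_eq_inner_map_inv_mul]
    refine hF _ fun hmem => hg' ?_
    simpa using Finset.smul_mem_smul_finset (a := g) hmem
  have hrow := fun g => summable_mul_and_tsum_mul_le_of_le_off_finset (g • F) hu0 hu hu1 huh
    (fun _ => abs_nonneg _) (fun g' => abs_inner_map_map_le (σ g) (σ g') a) hδ (hband g)
  simp only [Finset.card_smul_finset] at hrow
  obtain ⟨hsum, hle⟩ := summable_and_tsum_prod_le_of_tsum_le hu0 hu hu1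
    (fun _ _ => abs_nonneg _) (by positivity) (fun g => (hrow g).1) (fun g => (hrow g).2)
  have hnorm : ∀ p : Γ × Γ, ‖v p.1 * w p.1⁻¹ * (starRingEnd ℂ) (v p.2 * w p.2⁻¹) *
      ((inner ℝ (σ p.1 a) (σ p.2 a) : ℝ) : ℂ)‖ = u p.1 * u p.2 * k p.1 p.2 := fun p => by
    simp only [norm_mul, RingHomIsometric.norm_map, Complex.norm_real, Real.norm_eq_abs, u, k]
  calc _ ≤ ∑' p : Γ × Γ, ‖v p.1 * w p.1⁻¹ * (starRingEnd ℂ) (v p.2 * w p.2⁻¹) *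
          ((inner ℝ (σ p.1 a) (σ p.2 a) : ℝ) : ℂ)‖ :=
        norm_tsum_le_tsum_norm (by simpa only [hnorm] using hsum)
    _ = ∑' p : Γ × Γ, u p.1 * u p.2 * k p.1 p.2 := tsum_congr hnorm
    _ ≤ _ := hle

end UnitaryAction

theorem height_lemma_estimate_general
    {Γ : Type*} [Group Γ]
    {V : Type*} [NormedAddCommGroup V] [InnerProductSpace ℝ V]
    (σ : Γ →* (V ≃ₗᵢ[ℝ] V)) (a : V)
    (hmix : ∀ ε > (0 : ℝ), ∃ F : Finset Γ, ∀ s ∉ F, |(inner ℝ (σ s a) a : ℝ)| < ε)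
    (v w : ℕ → Γ → ℂ)
    (hv_sum : ∀ n, Summable (fun g => ‖v n g‖ ^ 2))
    (hv : ∀ n, ∑' g, ‖v n g‖ ^ 2 ≤ 1)
    (hw_sum : ∀ n, Summable (fun g => ‖w n g‖ ^ 2))
    (hw : ∀ n, ∑' g, ‖w n g‖ ^ 2 ≤ 1)
    (hheight : Tendsto (fun n => ⨆ g, ‖v n g‖) atTop (nhds 0)) :
    Tendsto (fun n => ∑' p : Γ × Γ,
        v n p.1 * w n p.1⁻¹ * (starRingEnd ℂ) (v n p.2 * w n p.2⁻¹) *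
          ((inner ℝ (σ p.1 a) (σ p.2 a) : ℝ) : ℂ))
      atTop (nhds 0) := by
  refine tendsto_nhds_zero_of_norm_le_add_mul hheight fun δ hδ => ?_
  obtain ⟨F, hF⟩ := hmix δ hδ
  exact ⟨‖a‖ ^ 2 * F.card, fun n => norm_tsum_le_of_abs_inner_le_off_finset σ a hδ.le F
    (fun s hs => (hF s hs).le) (v n) (w n) (hv_sum n) (hv n) (hw_sum n) (hw n)⟩

/-- The key estimate in the height lemma: if `a` has vanishing mixing
coefficients (for every `ε > 0` one has `|⟨σ_s(a), a⟩| < ε` off a finite set)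
and `(v_n)`, `(w_n)` are sequences in the unit ball of `ℓ²(Γ)` with heights
`sup_g |v_{n,g}| → 0`, then
`Σ_{g,g'} v_{n,g} w_{n,g⁻¹} conj(v_{n,g'} w_{n,g'⁻¹}) ⟨σ_g(a), σ_{g'}(a)⟩ → 0`. -/
theorem height_lemma_estimate
    {Γ : Type*} [Group Γ] [Countable Γ]
    {V : Type*} [NormedAddCommGroup V] [InnerProductSpace ℝ V]
    (σ : Γ →* (V ≃ₗᵢ[ℝ] V)) (a : V)
    (hmix : ∀ ε > (0 : ℝ), ∃ F : Finset Γ, ∀ s ∉ F, |(inner ℝ (σ s a) a : ℝ)| < ε)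
    (v w : ℕ → Γ → ℂ)
    (hv_sum : ∀ n, Summable (fun g => ‖v n g‖ ^ 2))
    (hv : ∀ n, ∑' g, ‖v n g‖ ^ 2 ≤ 1)
    (hw_sum : ∀ n, Summable (fun g => ‖w n g‖ ^ 2))
    (hw : ∀ n, ∑' g, ‖w n g‖ ^ 2 ≤ 1)
    (hheight : Tendsto (fun n => ⨆ g, ‖v n g‖) atTop (nhds 0)) :
    Tendsto (fun n => ∑' p : Γ × Γ,
        v n p.1 * w n p.1⁻¹ * (starRingEnd ℂ) (v n p.2 * w n p.2⁻¹) *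
          ((inner ℝ (σ p.1 a) (σ p.2 a) : ℝ) : ℂ))
      atTop (nhds 0) :=
  height_lemma_estimate_general σ a hmix v w hv_sum hv hw_sum hw hheight
end
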